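/- arXiv:1304.7833 — 9 statements merged into one kernel-verified Lean document; each statement's English description precedes it below -/
import Mathlib

section
/- Let p, v, y be real numbers with p > 1, v > 1 and y > 0, and set s* = y · v^(1/(1−p)) · (1 − v^(p/(1−p)))^(−1/p), where all powers are real (rpow) powers. Define f : ℝ → ℝ by f(s) = (s^p + y^p)^(1/p) − s/v. Then for every real s ≥ 0 with s ≠ s*, one has f(s*) < f(s); that is, f attains a strict global minimum on [0,∞) at s = s*. -/
/-!
Let `q` be the exponent conjugate to `p`, `c = 1/v` and `d = (1 - c^q)^(1/q)`, so that
`c^q + d^q = 1`. Hölder's inequality for `(s, y)` and `(c, d)` gives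
`c s + d y ≤ (s^p + y^p)^(1/p)`, i.e. `f s ≥ d y`, with equality exactly when
`s^p = c^q (s^p + y^p)`; solving this for `s` gives `s = s*`.
-/

open Real

namespace Real

variable {p q a b c d s t x y : ℝ}

theorem young_inequality_lt_of_nonneg (ha : 0 ≤ a) (hb : 0 ≤ b) (hpq : p.HolderConjugate q)
    (hab : a ^ p ≠ b ^ q) : a * b < a ^ p / p + b ^ q / q :=
  (young_inequality_of_nonneg ha hb hpq).lt_of_ne
    (mt (young_inequality_eq_iff_of_nonneg ha hb hpq).1 hab)

theorem young_bounds_add_eq_one (hpq : p.HolderConjugate q) (hab : a ^ p + b ^ p = 1)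
    (hcd : c ^ q + d ^ q = 1) : (a ^ p / p + c ^ q / q) + (b ^ p / p + d ^ q / q) = 1 :=
  calc _ = (a ^ p + b ^ p) / p + (c ^ q + d ^ q) / q := by ring
    _ = 1 := by rw [hab, hcd, one_div, one_div, hpq.inv_add_inv_eq_one]

theorem mul_add_mul_le_one (hpq : p.HolderConjugate q) (ha : 0 ≤ a) (hb : 0 ≤ b) (hc : 0 ≤ c)
    (hd : 0 ≤ d) (hab : a ^ p + b ^ p = 1) (hcd : c ^ q + d ^ q = 1) : a * c + b * d ≤ 1 := by
  have hac := young_inequality_of_nonneg ha hc hpq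
  have hbd := young_inequality_of_nonneg hb hd hpq
  linarith [young_bounds_add_eq_one hpq hab hcd]

theorem mul_add_mul_eq_one_iff (hpq : p.HolderConjugate q) (ha : 0 ≤ a) (hb : 0 ≤ b)
    (hc : 0 ≤ c) (hd : 0 ≤ d) (hab : a ^ p + b ^ p = 1) (hcd : c ^ q + d ^ q = 1) :
    a * c + b * d = 1 ↔ a ^ p = c ^ q := by
  have hsum := young_bounds_add_eq_one hpq hab hcd
  refine ⟨fun h => ?_, fun h => ?_⟩
  · by_contra hne
    have hac := young_inequality_lt_of_nonneg ha hc hpq hne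
    have hbd := young_inequality_of_nonneg hb hd hpq
    linarith
  · have hbd : b ^ p = d ^ q := by linarith
    rwa [(young_inequality_eq_iff_of_nonneg ha hc hpq).2 h,
      (young_inequality_eq_iff_of_nonneg hb hd hpq).2 hbd]

theorem div_rpow_one_div_rpow (hp : p ≠ 0) (hx : 0 ≤ x) (ht : 0 ≤ t) :
    (x / t ^ (1 / p)) ^ p = x ^ p / t := by
  rw [div_rpow hx (by positivity), ← rpow_mul ht, one_div_mul_cancel hp, rpow_one]

theorem div_rpow_add_div_rpow_eq_one (hp : p ≠ 0) (hs : 0 ≤ s) (hy : 0 < y) :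
    (s / (s ^ p + y ^ p) ^ (1 / p)) ^ p + (y / (s ^ p + y ^ p) ^ (1 / p)) ^ p = 1 := by
  have hN : 0 < s ^ p + y ^ p := by positivity
  rw [div_rpow_one_div_rpow hp hs hN.le, div_rpow_one_div_rpow hp hy.le hN.le, ← add_div,
    div_self hN.ne']

theorem mul_add_mul_le_rpow_add_rpow (hpq : p.HolderConjugate q) (hc : 0 ≤ c) (hd : 0 ≤ d)
    (hcd : c ^ q + d ^ q = 1) (hs : 0 ≤ s) (hy : 0 < y) :
    c * s + d * y ≤ (s ^ p + y ^ p) ^ (1 / p) := by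
  have hN : 0 < (s ^ p + y ^ p) ^ (1 / p) := by positivity
  have h := mul_add_mul_le_one hpq (div_nonneg hs hN.le) (div_nonneg hy.le hN.le) hc hd
    (div_rpow_add_div_rpow_eq_one hpq.ne_zero hs hy) hcd
  rw [div_mul_eq_mul_div, div_mul_eq_mul_div, ← add_div, div_le_one hN] at h
  linarith

theorem mul_add_mul_eq_rpow_add_rpow_iff (hpq : p.HolderConjugate q) (hc : 0 ≤ c) (hd : 0 ≤ d)
    (hcd : c ^ q + d ^ q = 1) (hs : 0 ≤ s) (hy : 0 < y) :
    c * s + d * y = (s ^ p + y ^ p) ^ (1 / p) ↔ s ^ p = c ^ q * (s ^ p + y ^ p) := by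
  have hN : 0 < (s ^ p + y ^ p) ^ (1 / p) := by positivity
  have h := mul_add_mul_eq_one_iff hpq (div_nonneg hs hN.le) (div_nonneg hy.le hN.le) hc hd
    (div_rpow_add_div_rpow_eq_one hpq.ne_zero hs hy) hcd
  rw [div_mul_eq_mul_div, div_mul_eq_mul_div, ← add_div, div_eq_one_iff_eq hN.ne',
    div_rpow_one_div_rpow hpq.ne_zero hs (by positivity), div_eq_iff (by positivity)] at h
  rw [mul_comm c, mul_comm d, h]

theorem rpow_div_one_sub_lt_one {v : ℝ} (hp : 1 < p) (hv : 1 < v) : v ^ (p / (1 - p)) < 1 :=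
  rpow_lt_one_of_one_lt_of_neg hv (div_neg_of_pos_of_neg (by linarith) (by linarith))

end Real

noncomputable def entryOffset (p v y : ℝ) : ℝ :=
  y * v ^ (1 / (1 - p)) * (1 - v ^ (p / (1 - p))) ^ (-1 / p)

theorem eq_entryOffset_iff {p v y s : ℝ} (hp : 1 < p) (hv : 1 < v) (hy : 0 < y) (hs : 0 ≤ s) :
    s = entryOffset p v y ↔ s ^ p = v ^ (p / (1 - p)) * (s ^ p + y ^ p) := by
  have hv0 : 0 < v := by linarith
  set K := v ^ (p / (1 - p))
  have hK : 0 < 1 - K := sub_pos.2 (rpow_div_one_sub_lt_one hp hv)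
  have hoff : 0 ≤ entryOffset p v y := by unfold entryOffset; positivity
  have hoff_rpow : entryOffset p v y ^ p = K * y ^ p / (1 - K) := by
    have e1 : 1 / (1 - p) * p = p / (1 - p) := by ring
    have e2 : -1 / p * p = -1 := div_mul_cancel₀ _ (by linarith)
    rw [entryOffset, mul_rpow (by positivity) (by positivity), mul_rpow hy.le (by positivity),
      ← rpow_mul hv0.le, ← rpow_mul hK.le, e1, e2, rpow_neg_one]
    ring
  rw [← rpow_left_inj hs hoff (by linarith : p ≠ 0), hoff_rpow, eq_div_iff hK.ne']
  constructor <;> intro h <;> linarith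

/-- The net time advantage `f(s) = (s^p + y^p)^(1/p) - s/v` of entering the
highway at offset `s` attains a strict global minimum on `[0,∞)` at
`s* = y · v^(1/(1-p)) · (1 - v^(p/(1-p)))^(-1/p)`. -/
theorem stmt_3 (p v y : ℝ) (hp : 1 < p) (hv : 1 < v) (hy : 0 < y) :
    let sStar : ℝ := y * v ^ (1 / (1 - p)) * (1 - v ^ (p / (1 - p))) ^ (-1 / p)
    let f : ℝ → ℝ := fun s => (s ^ p + y ^ p) ^ (1 / p) - s / v
    ∀ s : ℝ, 0 ≤ s → s ≠ sStar → f sStar < f s := by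
  intro sStar f s hs hne
  have hv0 : 0 < v := by linarith
  set q := p.conjExponent
  have hpq : p.HolderConjugate q := .conjExponent hp
  set K := v ^ (p / (1 - p))
  have hK : v⁻¹ ^ q = K := by
    rw [inv_rpow hv0.le, ← rpow_neg hv0.le, hpq.conjugate_eq, ← div_neg, neg_sub]
  have hK1 : K < 1 := rpow_div_one_sub_lt_one hp hv
  set d := (1 - K) ^ q⁻¹
  have hd : 0 ≤ d := by positivity
  have hcd : v⁻¹ ^ q + d ^ q = 1 := by
    rw [hK, rpow_inv_rpow (by linarith) hpq.symm.ne_zero]; ring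
  have hopt : ∀ t, 0 ≤ t → d * y ≤ f t ∧ (d * y = f t ↔ t = sStar) := by
    intro t ht
    have hle := mul_add_mul_le_rpow_add_rpow hpq (inv_nonneg.2 hv0.le) hd hcd ht hy
    have heq := mul_add_mul_eq_rpow_add_rpow_iff hpq (inv_nonneg.2 hv0.le) hd hcd ht hy
    rw [hK, ← eq_entryOffset_iff hp hv hy ht] at heq
    change _ ↔ t = sStar at heq
    change d * y ≤ _ - t / v ∧ (d * y = _ - t / v ↔ _)
    rw [div_eq_inv_mul t v, ← heq]
    exact ⟨by linarith, by constructor <;> intro h <;> linarith⟩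
  have hstar := (hopt sStar (by positivity)).2.2 rfl
  linarith [(hopt s hs).1.lt_of_ne (mt (hopt s hs).2.1 hne)]
end

section
/- Let p, v be real numbers with p > 1 and v > 1, set τ = v^(1/(1−p)) · (1 − v^(p/(1−p)))^(−1/p) (real powers), and let q1 = (x1,y1), q2 = (x2,y2) with y1 ≥ 0, y2 ≥ 0 and x1 + y1·τ ≤ x2 − y2·τ. Then the value (y1 + y2)·(1 + τ^p)^(1/p) + ((x2 − y2·τ) − (x1 + y1·τ))/v is the least element of the set { c : ℝ | ∃ a b : ℝ, a ≤ b ∧ c = (|x1 − a|^p + y1^p)^(1/p) + (b − a)/v + (|x2 − b|^p + y2^p)^(1/p) }. -/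
open Real

/-!
Write `q = p/(p-1)` for the conjugate exponent and `w = (1 - v^(p/(1-p)))^(1/q)`. Since
`(1/v)^q + w^q = 1`, Hölder's inequality on the pair `(|t|, y)` against `(1/v, w)` gives
`y·w ≤ (|t|^p + y^p)^(1/p) + t/v` for every horizontal offset `t`, with equality at `t = -y·τ`.
Splitting the highway stretch `b - a` as `(x1 - a) + (x2 - x1) + (b - x2)` and applying this to
both off-highway legs bounds every path cost below by `(y1 + y2)·w + (x2 - x1)/v`, which is the
cost of entering at `x1 + y1·τ` and exiting at `x2 - y2·τ`.
-/

theorem mul_add_mul_le_rpow_add_rpow {p q : ℝ} (hpq : p.HolderConjugate q) {a b c d : ℝ}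
    (ha : 0 ≤ a) (hb : 0 ≤ b) (hc : 0 ≤ c) (hd : 0 ≤ d) (hcd : c ^ q + d ^ q = 1) :
    a * c + b * d ≤ (a ^ p + b ^ p) ^ (1 / p) := by
  have holder := inner_le_Lp_mul_Lq_of_nonneg (s := Finset.univ) (f := ![a, b]) (g := ![c, d])
    hpq (by intro i _; fin_cases i <;> simp [ha, hb]) (by intro i _; fin_cases i <;> simp [hc, hd])
  simpa [Fin.sum_univ_two, hcd] using holder

theorem rpow_mul_add_rpow_rpow {p y τ : ℝ} (hp : p ≠ 0) (hy : 0 ≤ y) (hτ : 0 ≤ τ) :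
    ((y * τ) ^ p + y ^ p) ^ (1 / p) = y * (1 + τ ^ p) ^ (1 / p) := by
  rw [mul_rpow hy hτ, show y ^ p * τ ^ p + y ^ p = y ^ p * (1 + τ ^ p) by ring,
    mul_rpow (rpow_nonneg hy _) (by positivity), ← rpow_mul hy, mul_one_div, div_self hp,
    rpow_one]

namespace Highway

noncomputable section

def incidenceTangent (p v : ℝ) : ℝ :=
  v ^ (1 / (1 - p)) * (1 - v ^ (p / (1 - p))) ^ (-1 / p)

def offRoadRate (p v : ℝ) : ℝ :=
  (1 - v ^ (p / (1 - p))) ^ ((p - 1) / p)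

variable {p v : ℝ}

theorem rpow_div_one_sub_lt_one (hp : 1 < p) (hv : 1 < v) : v ^ (p / (1 - p)) < 1 :=
  rpow_lt_one_of_one_lt_of_neg hv (div_neg_of_pos_of_neg (by linarith) (by linarith))

theorem incidenceTangent_pos (hp : 1 < p) (hv : 1 < v) : 0 < incidenceTangent p v :=
  mul_pos (rpow_pos_of_pos (by linarith) _)
    (rpow_pos_of_pos (sub_pos.2 (rpow_div_one_sub_lt_one hp hv)) _)

theorem one_add_incidenceTangent_rpow (hp : 1 < p) (hv : 1 < v) :
    1 + incidenceTangent p v ^ p = (1 - v ^ (p / (1 - p)))⁻¹ := by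
  have hv0 : 0 ≤ v := by linarith
  have hr := sub_pos.2 (rpow_div_one_sub_lt_one hp hv)
  have hp1 : 1 - p ≠ 0 := by linarith
  rw [incidenceTangent, mul_rpow (rpow_nonneg hv0 _) (rpow_nonneg hr.le _), ← rpow_mul hv0,
    ← rpow_mul hr.le, show 1 / (1 - p) * p = p / (1 - p) by ring,
    show -1 / p * p = -1 by field_simp, rpow_neg_one]
  field_simp
  ring

theorem rpow_one_add_incidenceTangent_sub (hp : 1 < p) (hv : 1 < v) :
    (1 + incidenceTangent p v ^ p) ^ (1 / p) - incidenceTangent p v / v = offRoadRate p v := by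
  have hv0 : 0 < v := by linarith
  have hp1 : 1 - p ≠ 0 := by linarith
  have hr := sub_pos.2 (rpow_div_one_sub_lt_one hp hv)
  have hmul : v ^ (1 / (1 - p)) = v ^ (p / (1 - p)) * v := by
    rw [← rpow_add_one hv0.ne']
    congr 1
    field_simp
    ring
  rw [one_add_incidenceTangent_rpow hp hv, ← rpow_neg_one, ← rpow_mul hr.le, incidenceTangent,
    offRoadRate, hmul, show (p - 1) / p = 1 + -1 / p by field_simp; ring, rpow_add hr, rpow_one,
    show -1 * (1 / p) = -1 / p by ring]
  field_simp

theorem inv_rpow_add_offRoadRate_rpow (hp : 1 < p) (hv : 1 < v) :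
    v⁻¹ ^ p.conjExponent + offRoadRate p v ^ p.conjExponent = 1 := by
  have hv0 : 0 ≤ v := by linarith
  have hr := sub_pos.2 (rpow_div_one_sub_lt_one hp hv)
  have hp1 : p - 1 ≠ 0 := by linarith
  have hp1' : 1 - p ≠ 0 := by linarith
  rw [offRoadRate, ← rpow_neg_one, ← rpow_mul hv0, ← rpow_mul hr.le, conjExponent,
    show (p - 1) / p * (p / (p - 1)) = 1 by field_simp,
    show -1 * (p / (p - 1)) = p / (1 - p) by field_simp; ring, rpow_one]
  ring

theorem mul_offRoadRate_le (hp : 1 < p) (hv : 1 < v) {y : ℝ} (hy : 0 ≤ y) (t : ℝ) :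
    y * offRoadRate p v ≤ (|t| ^ p + y ^ p) ^ (1 / p) + t / v := by
  have holder := mul_add_mul_le_rpow_add_rpow (HolderConjugate.conjExponent hp) (abs_nonneg t) hy
    (inv_nonneg.2 (by linarith)) (rpow_nonneg (sub_pos.2 (rpow_div_one_sub_lt_one hp hv)).le _)
    (inv_rpow_add_offRoadRate_rpow hp hv)
  rw [← offRoadRate] at holder
  have hneg : -(t / v) ≤ |t| * v⁻¹ := by
    rw [div_eq_mul_inv, ← neg_mul]
    exact mul_le_mul_of_nonneg_right (neg_le_abs t) (inv_nonneg.2 (by linarith))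
  linarith

end

end Highway

open Highway in
/-- The optimal cost of a time-path from `q1 = (x1,y1)` to `q2 = (x2,y2)` using the
highway, entering at `(a,0)` and exiting at `(b,0)` with `a ≤ b`, is attained at the
entry point `(x1 + y1·τ, 0)` and exit point `(x2 - y2·τ, 0)`, where
`τ = v^(1/(1-p)) · (1 - v^(p/(1-p)))^(-1/p)` is the tangent of the incidence angle. -/
theorem stmt_5 (p v x1 y1 x2 y2 : ℝ) (hp : 1 < p) (hv : 1 < v)
    (hy1 : 0 ≤ y1) (hy2 : 0 ≤ y2) :
    let τ : ℝ := v ^ (1 / (1 - p)) * (1 - v ^ (p / (1 - p))) ^ (-1 / p)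
    x1 + y1 * τ ≤ x2 - y2 * τ →
    IsLeast
      {c : ℝ | ∃ a b : ℝ, a ≤ b ∧
        c = (|x1 - a| ^ p + y1 ^ p) ^ (1 / p) + (b - a) / v
            + (|x2 - b| ^ p + y2 ^ p) ^ (1 / p)}
      ((y1 + y2) * (1 + τ ^ p) ^ (1 / p) + ((x2 - y2 * τ) - (x1 + y1 * τ)) / v) := by
  intro τ hle
  have hτdef : incidenceTangent p v = τ := rfl
  have hτ : 0 ≤ τ := (incidenceTangent_pos hp hv).le
  have hopt : (y1 + y2) * (1 + τ ^ p) ^ (1 / p) + ((x2 - y2 * τ) - (x1 + y1 * τ)) / v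
      = y1 * offRoadRate p v + y2 * offRoadRate p v + (x2 - x1) / v := by
    rw [← rpow_one_add_incidenceTangent_sub hp hv, hτdef]
    ring
  constructor
  · refine ⟨x1 + y1 * τ, x2 - y2 * τ, hle, ?_⟩
    rw [show x1 - (x1 + y1 * τ) = -(y1 * τ) by ring, abs_neg, sub_sub_cancel,
      abs_of_nonneg (mul_nonneg hy1 hτ), abs_of_nonneg (mul_nonneg hy2 hτ),
      rpow_mul_add_rpow_rpow (by linarith) hy1 hτ, rpow_mul_add_rpow_rpow (by linarith) hy2 hτ]
    ring
  · rintro c ⟨a, b, -, rfl⟩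
    have leg1 := mul_offRoadRate_le hp hv hy1 (x1 - a)
    have leg2 := mul_offRoadRate_le hp hv hy2 (b - x2)
    rw [abs_sub_comm x2 b, hopt]
    linarith [show (b - a) / v = (x1 - a) / v + (b - x2) / v + (x2 - x1) / v by ring]
end

section
/- Let p, v, t be real numbers with p > 1, v > 1 and t > 0, and set x̂ = t · v^(1/(1−p)) (real powers), so 0 < x̂ < t. Define g : ℝ → ℝ by g(x) = (t^p − x^p)^(1/p). Then g has derivative D = −(t^p − x̂^p)^((1−p)/p) · x̂^(p−1) at x̂, and g(x̂) + D·(v·t − x̂) = 0; that is, the tangent line to the graph of g at x = x̂ passes through the point (v·t, 0). -/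
/-!
Write `x̂ = t·c` with `c = v^(1/(1-p))`, so that `x̂^(p-1)·v = t^(p-1)`. This gives the identity
`t^p - x̂^p = x̂^(p-1)·(v·t - x̂)`, and with `A = t^p - x̂^p` the tangent line at `x̂` meets the
axis at `v·t` because `A^(1/p) = A^((1-p)/p)·A`.
-/

open Real

lemma Real.rpow_one_div_eq_rpow_mul_self {A p : ℝ} (hA : 0 < A) (hp : p ≠ 0) :
    A ^ (1 / p) = A ^ ((1 - p) / p) * A := by
  rw [← rpow_add_one hA.ne']
  congr 1
  field_simp
  ring

lemma hasDerivAt_rpow_sub_rpow_rpow_one_div {p t x : ℝ} (hp : p ≠ 0) (hx : x ≠ 0)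
    (hA : t ^ p - x ^ p ≠ 0) :
    HasDerivAt (fun x => (t ^ p - x ^ p) ^ (1 / p))
      (-((t ^ p - x ^ p) ^ ((1 - p) / p) * x ^ (p - 1))) x := by
  have hinner : HasDerivAt (fun x => t ^ p - x ^ p) (-(p * x ^ (p - 1))) x := by
    simpa using (hasDerivAt_rpow_const (p := p) (Or.inl hx)).const_sub (t ^ p)
  convert hinner.rpow_const (p := 1 / p) (Or.inl hA) using 1
  rw [show 1 / p - 1 = (1 - p) / p by field_simp]
  field_simp

lemma Real.rpow_one_div_one_sub_rpow_sub_one {v : ℝ} (p : ℝ) (hv : 0 ≤ v) (hp : p ≠ 1) :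
    (v ^ (1 / (1 - p))) ^ (p - 1) = v⁻¹ := by
  rw [← rpow_mul hv, ← rpow_neg_one]
  congr 1
  field_simp [sub_ne_zero.mpr hp.symm]
  ring

lemma rpow_sub_rpow_eq_rpow_sub_one_mul {p v t : ℝ} (hp : p ≠ 1) (hv : 0 < v) (ht : 0 < t) :
    t ^ p - (t * v ^ (1 / (1 - p))) ^ p =
      (t * v ^ (1 / (1 - p))) ^ (p - 1) * (v * t - t * v ^ (1 / (1 - p))) := by
  set c := v ^ (1 / (1 - p))
  have hc : 0 < c := rpow_pos_of_pos hv _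
  have hslope : (t * c) ^ (p - 1) * v = t ^ (p - 1) := by
    rw [mul_rpow ht.le hc.le, rpow_one_div_one_sub_rpow_sub_one p hv.le hp, mul_assoc,
      inv_mul_cancel₀ hv.ne', mul_one]
  have hxp : (t * c) ^ p = (t * c) ^ (p - 1) * (t * c) := by
    rw [← rpow_add_one (by positivity), sub_add_cancel]
  have htp : t ^ p = t ^ (p - 1) * t := by
    rw [← rpow_add_one ht.ne', sub_add_cancel]
  rw [hxp, htp, ← hslope]
  ring

/-- The tangent line to the first-quadrant arc `g(x) = (t^p - x^p)^(1/p)` of the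
`p`-circle of radius `t` at `x̂ = t·v^(1/(1-p))` has slope
`D = -(t^p - x̂^p)^((1-p)/p)·x̂^(p-1)` and passes through `(v·t, 0)`. -/
theorem stmt_6 (p v t : ℝ) (hp : 1 < p) (hv : 1 < v) (ht : 0 < t) :
    let xhat : ℝ := t * v ^ (1 / (1 - p))
    let g : ℝ → ℝ := fun x => (t ^ p - x ^ p) ^ (1 / p)
    let D : ℝ := -((t ^ p - xhat ^ p) ^ ((1 - p) / p) * xhat ^ (p - 1))
    HasDerivAt g D xhat ∧ g xhat + D * (v * t - xhat) = 0 := by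
  intro xhat g D
  have hc_pos : 0 < v ^ (1 / (1 - p)) := rpow_pos_of_pos (by linarith) _
  have hc_lt_one : v ^ (1 / (1 - p)) < 1 :=
    rpow_lt_one_of_one_lt_of_neg hv (one_div_neg.mpr (by linarith))
  have hxhat_pos : 0 < xhat := mul_pos ht hc_pos
  have hxhat_lt : xhat < v * t := by
    have : t * v ^ (1 / (1 - p)) < t * v := mul_lt_mul_of_pos_left (by linarith) ht
    simpa [xhat, mul_comm v t] using this
  have hkey : t ^ p - xhat ^ p = xhat ^ (p - 1) * (v * t - xhat) :=
    rpow_sub_rpow_eq_rpow_sub_one_mul hp.ne' (by linarith) ht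
  have hA : 0 < t ^ p - xhat ^ p := by
    rw [hkey]
    exact mul_pos (rpow_pos_of_pos hxhat_pos _) (sub_pos.mpr hxhat_lt)
  refine ⟨hasDerivAt_rpow_sub_rpow_rpow_one_div (by linarith) hxhat_pos.ne' hA.ne', ?_⟩
  change (t ^ p - xhat ^ p) ^ (1 / p) + D * (v * t - xhat) = 0
  rw [rpow_one_div_eq_rpow_mul_self hA (by linarith)]
  linear_combination (t ^ p - xhat ^ p) ^ ((1 - p) / p) * hkey
end

section
/- Let p, v, t be real numbers with p > 1, v > 1 and t > 0, set x̂ = t · v^(1/(1−p)) and ŷ = (t^p − x̂^p)^(1/p) (real powers). Then for every x ∈ [0, t], (t^p − x^p)^(1/p) · (v·t − x̂) ≤ ŷ · (v·t − x); that is, the first-quadrant arc of the p-circle of radius t lies below the line through (x̂, ŷ) and (v·t, 0). -/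
open Real

/-!
By Young's inequality with exponents `p` and `p / (p - 1)`, the line
`X c^(p-1) + Y d^(p-1) = c^p + d^p` through a point `(c, d)` of a first-quadrant `p`-circle
supports the whole arc. For `c = x̂ = t v^(1/(1-p))` this tangent line meets the axis `Y = 0`
exactly at `X = v t`, so it is the line through `(x̂, ŷ)` and `(v t, 0)`.
-/

namespace Real

lemma rpow_eq_rpow_sub_one_mul {c p : ℝ} (hc : 0 ≤ c) (hp : p ≠ 0) :
    c ^ p = c ^ (p - 1) * c := by
  conv_lhs => rw [← sub_add_cancel p 1]
  rw [rpow_add' hc (by simpa using hp), rpow_one]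

lemma mul_rpow_sub_one_le {a c p : ℝ} (ha : 0 ≤ a) (hc : 0 ≤ c) (hp : 1 < p) :
    a * c ^ (p - 1) ≤ a ^ p / p + c ^ p * (1 - 1 / p) := by
  have hYoung := young_inequality_of_nonneg ha (rpow_nonneg hc (p - 1))
    (HolderConjugate.conjExponent hp)
  have hq : (p - 1) * conjExponent p = p := by
    unfold conjExponent; field_simp [(sub_pos.2 hp).ne']
  rw [← rpow_mul hc, hq] at hYoung
  convert hYoung using 2
  unfold conjExponent; field_simp

lemma mul_rpow_sub_one_add_mul_rpow_sub_one_le {a b c d p : ℝ} (ha : 0 ≤ a) (hb : 0 ≤ b)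
    (hc : 0 ≤ c) (hd : 0 ≤ d) (hp : 1 < p) (hab : a ^ p + b ^ p = c ^ p + d ^ p) :
    a * c ^ (p - 1) + b * d ^ (p - 1) ≤ c ^ p + d ^ p := by
  have hca := mul_rpow_sub_one_le ha hc hp
  have hdb := mul_rpow_sub_one_le hb hd hp
  have hsum : a ^ p / p + c ^ p * (1 - 1 / p) + (b ^ p / p + d ^ p * (1 - 1 / p))
      = c ^ p + d ^ p := by
    linear_combination hab / p
  linarith

/-- `hX` says that the tangent line at `(c, d)` meets `Y = 0` at `X`. -/
lemma mul_sub_le_mul_sub_of_tangent {a b c d p X : ℝ} (ha : 0 ≤ a) (hb : 0 ≤ b)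
    (hc : 0 ≤ c) (hd : 0 < d) (hp : 1 < p) (hab : a ^ p + b ^ p = c ^ p + d ^ p)
    (hX : c ^ (p - 1) * X = c ^ p + d ^ p) :
    b * (X - c) ≤ d * (X - a) := by
  have hp0 : p ≠ 0 := by linarith
  have hline := mul_rpow_sub_one_add_mul_rpow_sub_one_le ha hb hc hd.le hp hab
  have hdp : d ^ p = c ^ (p - 1) * (X - c) := by
    rw [mul_sub, hX, ← rpow_eq_rpow_sub_one_mul hc hp0]; ring
  have hXc : 0 ≤ X - c := by
    by_contra! h
    nlinarith [rpow_pos_of_pos hd p, rpow_nonneg hc (p - 1)]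
  have hd1 : 0 < d ^ (p - 1) := rpow_pos_of_pos hd _
  rw [← mul_le_mul_iff_right₀ hd1]
  calc d ^ (p - 1) * (b * (X - c)) = (b * d ^ (p - 1)) * (X - c) := by ring
    _ ≤ (c ^ (p - 1) * (X - a)) * (X - c) :=
        mul_le_mul_of_nonneg_right (by rw [mul_sub, hX]; linarith) hXc
    _ = d ^ p * (X - a) := by rw [hdp]; ring
    _ = d ^ (p - 1) * (d * (X - a)) := by rw [rpow_eq_rpow_sub_one_mul hd.le hp0]; ring

lemma rpow_add_rpow_sub_rpow_one_div_rpow {a t p : ℝ} (ha : 0 ≤ a) (hat : a ≤ t)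
    (hp : 0 < p) :
    a ^ p + ((t ^ p - a ^ p) ^ (1 / p)) ^ p = t ^ p := by
  rw [one_div, rpow_inv_rpow (sub_nonneg.2 (rpow_le_rpow ha hat hp.le)) hp.ne']
  ring

lemma mul_rpow_one_div_one_sub_rpow_sub_one_mul {p v t : ℝ} (hp : p ≠ 1) (hv : 0 < v)
    (ht : 0 < t) : (t * v ^ (1 / (1 - p))) ^ (p - 1) * (v * t) = t ^ p := by
  have hexp : 1 / (1 - p) * (p - 1) = -1 := by
    field_simp [sub_ne_zero.2 (Ne.symm hp)]; ring
  rw [mul_rpow ht.le (rpow_nonneg hv.le _), ← rpow_mul hv.le, hexp, rpow_neg_one,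
    rpow_sub_one ht.ne']
  field_simp

end Real

/-- The first-quadrant arc of the `p`-circle of radius `t` lies below the line
through the tangent point `(x̂, ŷ)` and `(v·t, 0)`. -/
theorem stmt_7 (p v t : ℝ) (hp : 1 < p) (hv : 1 < v) (ht : 0 < t) :
    let xhat : ℝ := t * v ^ (1 / (1 - p))
    let yhat : ℝ := (t ^ p - xhat ^ p) ^ (1 / p)
    ∀ x ∈ Set.Icc (0:ℝ) t,
      (t ^ p - x ^ p) ^ (1 / p) * (v * t - xhat) ≤ yhat * (v * t - x) := by
  intro xhat yhat x ⟨hx0, hxt⟩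
  have hp0 : 0 < p := by linarith
  have hxhat0 : 0 ≤ xhat := by positivity
  have hxhat_lt : xhat < t :=
    mul_lt_of_lt_one_right ht (rpow_lt_one_of_one_lt_of_neg hv (one_div_neg.2 (by linarith)))
  have hyhat : 0 < yhat := rpow_pos_of_pos (sub_pos.2 (rpow_lt_rpow hxhat0 hxhat_lt hp0)) _
  have hxhat_circle := rpow_add_rpow_sub_rpow_one_div_rpow hxhat0 hxhat_lt.le hp0
  have hy0 : 0 ≤ (t ^ p - x ^ p) ^ (1 / p) :=
    rpow_nonneg (sub_nonneg.2 (rpow_le_rpow hx0 hxt hp0.le)) _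
  refine mul_sub_le_mul_sub_of_tangent hx0 hy0 hxhat0 hyhat hp ?_ ?_
  · rw [rpow_add_rpow_sub_rpow_one_div_rpow hx0 hxt hp0, hxhat_circle]
  · rw [hxhat_circle, mul_rpow_one_div_one_sub_rpow_sub_one_mul hp.ne' (by linarith) ht]
end

section
/- Let p, v, t, θ be real numbers with p > 1, v > 1, t > 0 and 0 < θ < π/2; set τ = tan θ and K = (1 + τ^p)^(−1/p) (real powers), and let q0 = (t·K, t·τ·K). Then for every γ ∈ [0, v·t], any point (x, y) ∈ ℝ² satisfying x ≥ γ, y = (x − γ)·τ and (x − γ)^p + y^p = (t − γ/v)^p lies on the segment joining q0 and (v·t, 0); explicitly, (x, y) = (1 − γ/(v·t)) • q0 + (γ/(v·t)) • (v·t, 0). -/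
/-! The point of the `ℓᵖ` circle of radius `r` in the direction of slope `τ ≥ 0` is
`r • K • (1, τ)` with `K = (1 + τᵖ)^(-1/p)`. For the wavefront emitted at `(γ, 0)` the radius
`t - γ / v` is affine in `γ`, so these points move along a line, reaching `(v t, 0)` at `γ = v t`. -/

open Real

lemma eq_mul_of_rpow_add_mul_rpow_eq {p r s τ : ℝ} (hp : p ≠ 0) (hr : 0 ≤ r) (hs : 0 ≤ s)
    (hτ : 0 ≤ τ) (h : s ^ p + (s * τ) ^ p = r ^ p) : s = r * (1 + τ ^ p) ^ (-1 / p) := by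
  have hA : 0 < 1 + τ ^ p := by positivity
  have hK : 0 ≤ (1 + τ ^ p) ^ (-1 / p) := rpow_nonneg hA.le _
  have hKp : ((1 + τ ^ p) ^ (-1 / p)) ^ p = (1 + τ ^ p)⁻¹ := by
    rw [← rpow_mul hA.le, div_mul_cancel₀ _ hp, rpow_neg_one]
  refine rpow_left_injOn hp hs (mul_nonneg hr hK) ?_
  dsimp only
  rw [mul_rpow hr hK, hKp, eq_mul_inv_iff_mul_eq₀ hA.ne']
  rw [mul_rpow hs hτ] at h
  linear_combination h

lemma wavefront_point_eq_convex_comb {v t : ℝ} (hvt : v * t ≠ 0) (γ a b : ℝ) :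
    ((γ + (t - γ / v) * a, (t - γ / v) * b) : ℝ × ℝ) =
      (1 - γ / (v * t)) • ((t * a, t * b) : ℝ × ℝ) + (γ / (v * t)) • ((v * t, 0) : ℝ × ℝ) := by
  have hv : v ≠ 0 := left_ne_zero_of_mul hvt
  have ht : t ≠ 0 := right_ne_zero_of_mul hvt
  ext <;> simp only [Prod.fst_add, Prod.snd_add, Prod.smul_fst, Prod.smul_snd, smul_eq_mul] <;>
    field_simp <;> ring

/-- For fixed direction `θ`, the points `q(γ,θ)` on the wavefront circles emitted
along the highway are collinear: each lies on the segment joining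
`q0 = (t·K, t·τ·K)` and `(v·t, 0)`, with the explicit convex-combination formula. -/
theorem stmt_8 (p v t θ : ℝ) (hp : 1 < p) (hv : 1 < v) (ht : 0 < t)
    (hθ0 : 0 < θ) (hθ1 : θ < π / 2) :
    let τ : ℝ := Real.tan θ
    let K : ℝ := (1 + τ ^ p) ^ (-1 / p)
    let q0 : ℝ × ℝ := (t * K, t * τ * K)
    ∀ γ ∈ Set.Icc (0:ℝ) (v * t), ∀ x y : ℝ,
      x ≥ γ → y = (x - γ) * τ → (x - γ) ^ p + y ^ p = (t - γ / v) ^ p →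
      (x, y) = (1 - γ / (v * t)) • q0 + (γ / (v * t)) • ((v * t, 0) : ℝ × ℝ) := by
  intro τ K q0 γ hγ x y hx hy hcircle
  have hv0 : 0 < v := one_pos.trans hv
  have hτ : 0 < τ := tan_pos_of_pos_of_lt_pi_div_two hθ0 hθ1
  have hr : 0 ≤ t - γ / v := by
    rw [sub_nonneg, div_le_iff₀ hv0, mul_comm]
    exact hγ.2
  rw [hy] at hcircle ⊢
  have hs : x - γ = (t - γ / v) * K :=
    eq_mul_of_rpow_add_mul_rpow_eq (zero_lt_one.trans hp).ne' hr (sub_nonneg.2 hx) hτ.le hcircle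
  have hq0 : q0 = (t * K, t * (τ * K)) := by simp only [q0, mul_assoc]
  rw [hq0, ← wavefront_point_eq_convex_comb (by positivity), ← hs]
  exact Prod.ext (add_sub_cancel γ x).symm (by rw [hs]; ring)
end

section
/- Let p, v, t be real numbers with p > 1, v > 1 and t > 0, and set x̂ = t · v^(1/(1−p)) and ŷ = (t^p − x̂^p)^(1/p) (real powers). Then for all real x ≥ 0 and y ≥ 0: there exists γ ∈ [−v·t, v·t] with (|x − γ|^p + y^p)^(1/p) ≤ t − |γ|/v if and only if ( x^p + y^p ≤ t^p ) or ( x̂ ≤ x ∧ x ≤ v·t ∧ y·(v·t − x̂) ≤ ŷ·(v·t − x) ). -/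
/-!
The reachable set is a union of `p`-balls whose radii shrink at rate `1 / v` along the highway.
The tangent line to the `p`-circle of radius `t` at a point `(a, b)` has normal
`(a ^ (p - 1), b ^ (p - 1))`, of dual norm `t ^ (p - 1)`, so by Hölder's inequality it supports
every one of these balls as soon as `v * a ^ (p - 1) ≤ t ^ (p - 1)`. The tangent lines
at `(x̂, ŷ)` and at the points of the circle left of it confine the reachable set to the disc
and the region under the segment from `(x̂, ŷ)` to `(v t, 0)`. Conversely, a homothety centred
at `(v t, 0)` maps the disc onto one of the balls and the segment from `(x̂, ŷ)` to `(v t, 0)`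
onto itself.
-/

open Real

def HighwayReachable (p v t x y : ℝ) : Prop :=
  ∃ γ ∈ Set.Icc (-(v * t)) (v * t), (|x - γ| ^ p + y ^ p) ^ (1 / p) ≤ t - |γ| / v

variable {p v t : ℝ}

lemma rpow_sub_one_mul_self (hp : p ≠ 0) {x : ℝ} (hx : 0 ≤ x) : x ^ (p - 1) * x = x ^ p := by
  rw [← rpow_add_one' hx (by simpa using hp), sub_add_cancel]

lemma rpow_one_div_le_iff (hp : 0 < p) {A r : ℝ} (hA : 0 ≤ A) :
    A ^ (1 / p) ≤ r ↔ 0 ≤ r ∧ A ≤ r ^ p := by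
  refine ⟨fun h => ?_, fun ⟨hr, h⟩ => ?_⟩
  · have hr := (rpow_nonneg hA _).trans h
    exact ⟨hr, (rpow_inv_le_iff_of_pos hA hr hp).1 (by simpa using h)⟩
  · simpa using (rpow_inv_le_iff_of_pos hA hr hp).2 h

lemma add_mul_rpow_sub_one_le (hp : 1 < p) {a b u w r : ℝ} (ha : 0 ≤ a) (hb : 0 ≤ b)
    (hu : 0 ≤ u) (hw : 0 ≤ w) (ht : 0 ≤ t) (hr : 0 ≤ r) (hab : a ^ p + b ^ p = t ^ p)
    (huw : u ^ p + w ^ p ≤ r ^ p) :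
    u * a ^ (p - 1) + w * b ^ (p - 1) ≤ r * t ^ (p - 1) := by
  have hq := HolderConjugate.conjExponent hp
  have hp0 : 0 < p := by linarith
  have key : ∀ c : ℝ, 0 ≤ c → (c ^ (p - 1)) ^ conjExponent p = c ^ p := fun c hc => by
    rw [← rpow_mul hc, conjExponent, mul_div_cancel₀ _ (by linarith)]
  have := inner_le_Lp_mul_Lq_of_nonneg Finset.univ hq (f := ![u, w])
    (g := ![a ^ (p - 1), b ^ (p - 1)]) (by simp [Fin.forall_fin_two, hu, hw])
    (by simp [Fin.forall_fin_two, rpow_nonneg, ha, hb])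
  simp only [Fin.sum_univ_two, Matrix.cons_val_zero, Matrix.cons_val_one, key a ha, key b hb,
    hab] at this
  refine this.trans (mul_le_mul ?_ (le_of_eq ?_) (by positivity) hr)
  · exact (rpow_one_div_le_iff hp0 (by positivity)).2 ⟨hr, huw⟩
  · rw [← rpow_mul ht, conjExponent]; congr 1; field_simp

lemma HighwayReachable.exists_nonneg_center (hp : 0 < p) {x y : ℝ} (hx : 0 ≤ x) (hy : 0 ≤ y)
    (h : HighwayReachable p v t x y) :
    ∃ γ, 0 ≤ γ ∧ 0 ≤ t - γ / v ∧ |x - γ| ^ p + y ^ p ≤ (t - γ / v) ^ p := by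
  obtain ⟨γ, -, hγ⟩ := h
  rw [rpow_one_div_le_iff hp (by positivity)] at hγ
  refine ⟨|γ|, abs_nonneg γ, hγ.1, le_trans ?_ hγ.2⟩
  have hdist : |(x - |γ|)| ≤ |x - γ| := by
    simpa only [abs_of_nonneg hx] using abs_abs_sub_abs_le_abs_sub x γ
  gcongr ?_ ^ _ + _

/-- Moving the centre `γ` along the highway raises `γ * a ^ (p - 1)` at rate at most
`t ^ (p - 1) / v`, exactly what Hölder's bound loses with the radius. -/
lemma add_mul_rpow_sub_one_le_of_dist_le (hp : 1 < p) (hv : 0 < v) (ht : 0 ≤ t)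
    {a b x y γ : ℝ} (ha : 0 ≤ a) (hb : 0 ≤ b) (hab : a ^ p + b ^ p = t ^ p)
    (hslope : v * a ^ (p - 1) ≤ t ^ (p - 1)) (hy : 0 ≤ y) (hγ : 0 ≤ γ) (hr : 0 ≤ t - γ / v)
    (h : |x - γ| ^ p + y ^ p ≤ (t - γ / v) ^ p) :
    x * a ^ (p - 1) + y * b ^ (p - 1) ≤ t ^ p := by
  have hholder := add_mul_rpow_sub_one_le hp ha hb (abs_nonneg _) hy ht hr hab h
  have hγa : γ * a ^ (p - 1) ≤ γ / v * t ^ (p - 1) := by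
    rw [div_mul_eq_mul_div, le_div_iff₀ hv, mul_assoc, mul_comm _ v]
    exact mul_le_mul_of_nonneg_left hslope hγ
  calc x * a ^ (p - 1) + y * b ^ (p - 1)
      = γ * a ^ (p - 1) + ((x - γ) * a ^ (p - 1) + y * b ^ (p - 1)) := by ring
    _ ≤ γ / v * t ^ (p - 1) + (t - γ / v) * t ^ (p - 1) := by
      have := mul_le_mul_of_nonneg_right (le_abs_self (x - γ)) (rpow_nonneg ha (p - 1))
      linarith
    _ = t ^ p := by linear_combination rpow_sub_one_mul_self (p := p) (by linarith) ht

/-- Rescale `(x, y)` onto the circle: the tangent line there separates `(x, y)` from every ball. -/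
lemma le_of_dist_le_of_lt_rpow_add (hp : 1 < p) (hv : 0 < v) (ht : 0 < t) {a x y γ : ℝ}
    (hslope : v * a ^ (p - 1) = t ^ (p - 1)) (hx : 0 ≤ x) (hy : 0 ≤ y) (hγ : 0 ≤ γ)
    (hr : 0 ≤ t - γ / v) (h : |x - γ| ^ p + y ^ p ≤ (t - γ / v) ^ p)
    (hout : t ^ p < x ^ p + y ^ p) : a ≤ x := by
  by_contra! hxa
  have hp0 : 0 < p := by linarith
  set s := (x ^ p + y ^ p) ^ (1 / p)
  have hs0 : 0 ≤ s := by positivity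
  have hs : s ^ p = x ^ p + y ^ p := by
    rw [← rpow_mul (by positivity), one_div_mul_cancel hp0.ne', rpow_one]
  have hts : t < s := (rpow_lt_rpow_iff ht.le hs0 hp0).1 (hs ▸ hout)
  set c := t / s
  have hc0 : 0 ≤ c := by positivity
  have hcs : c * s = t := div_mul_cancel₀ t (ht.trans hts).ne'
  have hc1 : c ≤ 1 := (div_le_one₀ (by linarith)).2 hts.le
  have hcx : c * x ≤ a := (mul_le_of_le_one_left hx hc1).trans hxa.le
  have hcirc : (c * x) ^ p + (c * y) ^ p = t ^ p := by
    rw [mul_rpow hc0 hx, mul_rpow hc0 hy, ← mul_add, ← hs, ← mul_rpow hc0 hs0, hcs]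
  have hslope' : v * (c * x) ^ (p - 1) ≤ t ^ (p - 1) :=
    hslope ▸ mul_le_mul_of_nonneg_left (rpow_le_rpow (by positivity) hcx (by linarith)) hv.le
  have hsupp := add_mul_rpow_sub_one_le_of_dist_le hp hv ht.le (by positivity) (by positivity)
    hcirc hslope' hy hγ hr h
  have hlhs : x * (c * x) ^ (p - 1) + y * (c * y) ^ (p - 1) = s * t ^ (p - 1) := by
    rw [mul_rpow hc0 hx, mul_rpow hc0 hy, ← hcs, mul_rpow hc0 hs0]
    linear_combination c ^ (p - 1) * (rpow_sub_one_mul_self (p := p) hp0.ne' hx +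
      rpow_sub_one_mul_self (p := p) hp0.ne' hy - hs - rpow_sub_one_mul_self (p := p) hp0.ne' hs0)
  have htp := rpow_sub_one_mul_self (p := p) hp0.ne' ht.le
  nlinarith [rpow_pos_of_pos ht (p - 1)]

lemma rpow_add_le_or_below_tangent_of_dist_le (hp : 1 < p) (hv : 1 < v) (ht : 0 < t)
    {a b x y γ : ℝ} (ha : 0 ≤ a) (hb : 0 ≤ b) (hab : a ^ p + b ^ p = t ^ p)
    (hslope : v * a ^ (p - 1) = t ^ (p - 1)) (hx : 0 ≤ x) (hy : 0 ≤ y) (hγ : 0 ≤ γ)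
    (hr : 0 ≤ t - γ / v) (h : |x - γ| ^ p + y ^ p ≤ (t - γ / v) ^ p) :
    x ^ p + y ^ p ≤ t ^ p ∨ (a ≤ x ∧ x ≤ v * t ∧ y * (v * t - a) ≤ b * (v * t - x)) := by
  have hp0 : 0 < p := by linarith
  refine or_iff_not_imp_left.2 fun hout => ⟨le_of_dist_le_of_lt_rpow_add hp (by linarith) ht
    hslope hx hy hγ hr h (not_le.1 hout), ?_, ?_⟩
  · have hdist : |x - γ| ≤ t - γ / v := by
      rw [← rpow_le_rpow_iff (abs_nonneg _) hr hp0]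
      linarith [rpow_nonneg hy p]
    have hγv : v * (γ / v) = γ := mul_div_cancel₀ γ (by linarith)
    nlinarith [le_abs_self (x - γ), mul_le_mul_of_nonneg_left hr (by linarith : (0:ℝ) ≤ v - 1)]
  · have hsupp := add_mul_rpow_sub_one_le_of_dist_le hp (by linarith) ht.le ha hb hab
      hslope.le hy hγ hr h
    have hpos := rpow_pos_of_pos ht (p - 1)
    refine le_of_mul_le_mul_left ?_ hpos
    have ea := rpow_sub_one_mul_self (p := p) hp0.ne' ha
    have eb := rpow_sub_one_mul_self (p := p) hp0.ne' hb
    have et := rpow_sub_one_mul_self (p := p) hp0.ne' ht.le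
    linear_combination (v * b) * hsupp + (y * a - b * x) * hslope + (v * y - v * b) * et
      - (v * y) * (eb + hab + ea)

lemma highwayReachable_of_homothety (hp : 0 < p) (hv : 0 < v) (ht : 0 ≤ t) {a b μ x y : ℝ}
    (ha : 0 ≤ a) (hb : 0 ≤ b) (hab : a ^ p + b ^ p ≤ t ^ p) (hμ0 : 0 ≤ μ) (hμ1 : μ ≤ 1)
    (hx : x = μ * a + (1 - μ) * (v * t)) (hy0 : 0 ≤ y) (hy : y ≤ μ * b) :
    HighwayReachable p v t x y := by
  have hγ : 0 ≤ (1 - μ) * (v * t) := mul_nonneg (sub_nonneg.2 hμ1) (by positivity)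
  have hvt : 0 ≤ v * t := by positivity
  refine ⟨(1 - μ) * (v * t), ⟨by linarith, by nlinarith⟩, ?_⟩
  have hradius : t - (1 - μ) * (v * t) / v = μ * t := by field_simp; ring
  rw [abs_of_nonneg hγ, hx, add_sub_cancel_right, abs_of_nonneg (by positivity),
    rpow_one_div_le_iff hp (by positivity), hradius]
  refine ⟨by positivity, ?_⟩
  calc (μ * a) ^ p + y ^ p ≤ (μ * a) ^ p + (μ * b) ^ p := by gcongr
    _ = μ ^ p * (a ^ p + b ^ p) := by rw [mul_rpow hμ0 ha, mul_rpow hμ0 hb]; ring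
    _ ≤ μ ^ p * t ^ p := by gcongr
    _ = (μ * t) ^ p := (mul_rpow hμ0 ht).symm

lemma highwayReachable_of_below_tangent (hp : 0 < p) (hv : 0 < v) (ht : 0 ≤ t) {a b x y : ℝ}
    (ha : 0 ≤ a) (hb : 0 ≤ b) (hab : a ^ p + b ^ p ≤ t ^ p) (hat : a < v * t) (hy : 0 ≤ y)
    (hax : a ≤ x) (hxv : x ≤ v * t) (hline : y * (v * t - a) ≤ b * (v * t - x)) :
    HighwayReachable p v t x y := by
  have hd : 0 < v * t - a := sub_pos.2 hat
  refine highwayReachable_of_homothety hp hv ht ha hb hab (μ := (v * t - x) / (v * t - a))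
    (div_nonneg (by linarith) hd.le) ((div_le_one₀ hd).2 (by linarith)) ?_ hy ?_
  · field_simp; ring
  · rw [div_mul_eq_mul_div, le_div_iff₀ hd]; linarith

lemma tangent_abscissa_lt (hp : 1 < p) (hv : 1 < v) (ht : 0 < t) :
    t * v ^ (1 / (1 - p)) < t :=
  mul_lt_of_lt_one_right ht (rpow_lt_one_of_one_lt_of_neg hv (one_div_neg.2 (by linarith)))

lemma mul_tangent_abscissa_rpow (hp : 1 < p) (hv : 0 < v) (ht : 0 ≤ t) :
    v * (t * v ^ (1 / (1 - p))) ^ (p - 1) = t ^ (p - 1) := by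
  have hp1 : 1 - p ≠ 0 := by linarith
  rw [mul_rpow ht (by positivity), ← rpow_mul hv.le,
    show 1 / (1 - p) * (p - 1) = -1 by field_simp; ring, rpow_neg_one]
  field_simp

/-- The region (in the quadrant `x, y ≥ 0`) reachable within time `t` from the
highway point `(0,0)` is bounded by the circular sector of the `p`-circle of
radius `t` together with the tangent segment joining `(x̂, ŷ)` to `(v·t, 0)`. -/
theorem stmt_9 (p v t : ℝ) (hp : 1 < p) (hv : 1 < v) (ht : 0 < t) :
    let xhat : ℝ := t * v ^ (1 / (1 - p))
    let yhat : ℝ := (t ^ p - xhat ^ p) ^ (1 / p)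
    ∀ x y : ℝ, 0 ≤ x → 0 ≤ y →
      ((∃ γ ∈ Set.Icc (-(v * t)) (v * t),
          (|x - γ| ^ p + y ^ p) ^ (1 / p) ≤ t - |γ| / v) ↔
        (x ^ p + y ^ p ≤ t ^ p ∨
          (xhat ≤ x ∧ x ≤ v * t ∧ y * (v * t - xhat) ≤ yhat * (v * t - x)))) := by
  intro xhat yhat x y hx hy
  have hp0 : 0 < p := by linarith
  have hxhat0 : 0 ≤ xhat := by positivity
  have hxhat_lt : xhat < t := tangent_abscissa_lt hp hv ht
  have hslope : v * xhat ^ (p - 1) = t ^ (p - 1) :=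
    mul_tangent_abscissa_rpow hp (by linarith) ht.le
  have hxhat_pow : xhat ^ p ≤ t ^ p := rpow_le_rpow hxhat0 hxhat_lt.le hp0.le
  have hyhat0 : 0 ≤ yhat := rpow_nonneg (sub_nonneg.2 hxhat_pow) _
  have hcircle : xhat ^ p + yhat ^ p = t ^ p := by
    rw [← rpow_mul (sub_nonneg.2 hxhat_pow), one_div_mul_cancel hp0.ne', rpow_one]
    ring
  change HighwayReachable p v t x y ↔ _
  constructor
  · intro h
    obtain ⟨γ, hγ, hr, hdist⟩ := h.exists_nonneg_center hp0 hx hy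
    exact rpow_add_le_or_below_tangent_of_dist_le hp hv ht hxhat0 hyhat0 hcircle hslope
      hx hy hγ hr hdist
  · rintro (hdisk | ⟨hax, hxv, hline⟩)
    · exact highwayReachable_of_homothety hp0 (by linarith) ht.le hx hy hdisk zero_le_one le_rfl
        (by ring) hy (by rw [one_mul])
    · exact highwayReachable_of_below_tangent hp0 (by linarith) ht.le hxhat0 hyhat0
        hcircle.le (by nlinarith) hy hax hxv hline
end

section
/- Let v, x1, y1, x2, y2 be real numbers with v > 1, y1 ≥ 0, y2 ≥ 0 and x1 ≤ x2. Then the value y1 + y2 + max(0, (x2 − y2) − (x1 + y1))/v is the least element of the set { c : ℝ | ∃ a b : ℝ, c = max(|x1 − a|, y1) + |a − b|/v + max(|x2 − b|, y2) }. -/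
/-- Under `L_∞`, the optimal cost over all entry points `(a,0)` and exit points
`(b,0)` of a highway path from `(x1,y1)` to `(x2,y2)` is
`y1 + y2 + max(0, (x2 - y2) - (x1 + y1))/v`. -/
theorem stmt_11 (v x1 y1 x2 y2 : ℝ) (hv : 1 < v)
    (hy1 : 0 ≤ y1) (hy2 : 0 ≤ y2) (hx : x1 ≤ x2) :
    IsLeast
      {c : ℝ | ∃ a b : ℝ,
        c = max |x1 - a| y1 + |a - b| / v + max |x2 - b| y2}
      (y1 + y2 + max 0 ((x2 - y2) - (x1 + y1)) / v) := by
  have hv0 : (0:ℝ) < v := lt_trans one_pos hv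
  constructor
  · by_cases h : x1 + y1 ≤ x2 - y2
    · refine ⟨x1 + y1, x2 - y2, ?_⟩
      have h1 : |x1 - (x1 + y1)| = y1 := by
        rw [abs_of_nonpos (by linarith)]; ring
      have h2 : |x1 + y1 - (x2 - y2)| = x2 - y2 - (x1 + y1) := by
        rw [abs_of_nonpos (by linarith)]; ring
      have h3 : |x2 - (x2 - y2)| = y2 := by
        rw [abs_of_nonneg (by linarith)]; ring
      rw [h1, h2, h3, max_self, max_self,
        max_eq_right (by linarith : (0:ℝ) ≤ x2 - y2 - (x1 + y1))]
      ring
    · push_neg at h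
      set a := max (x1 - y1) (x2 - y2) with ha
      have ha1 : |x1 - a| ≤ y1 := by
        rw [abs_le]
        constructor
        · have : a ≤ x1 + y1 := max_le (by linarith) (by linarith)
          linarith
        · have : x1 - y1 ≤ a := le_max_left _ _
          linarith
      have ha2 : |x2 - a| ≤ y2 := by
        rw [abs_le]
        constructor
        · have : a ≤ x2 + y2 := max_le (by linarith) (by linarith)
          linarith
        · have : x2 - y2 ≤ a := le_max_right _ _
          linarith
      refine ⟨a, a, ?_⟩
      rw [max_eq_right ha1, max_eq_right ha2, sub_self, abs_zero,
        max_eq_left (by linarith : x2 - y2 - (x1 + y1) ≤ 0)]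
      ring
  · rintro c ⟨a, b, rfl⟩
    have hM1 : y1 ≤ max |x1 - a| y1 := le_max_right _ _
    have hM2 : y2 ≤ max |x2 - b| y2 := le_max_right _ _
    have habv : 0 ≤ |a - b| / v := div_nonneg (abs_nonneg _) hv0.le
    rcases le_or_gt (x2 - y2 - (x1 + y1)) 0 with h | h
    · rw [max_eq_left h]
      simp only [zero_div]
      linarith
    · rw [max_eq_right h.le]
      have k1 : (|x1 - a| - y1) / v ≤ max |x1 - a| y1 - y1 := by
        rcases le_total |x1 - a| y1 with hc | hc
        · rw [max_eq_right hc]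
          have : (|x1 - a| - y1) / v ≤ 0 :=
            div_nonpos_of_nonpos_of_nonneg (by linarith) hv0.le
          linarith
        · rw [max_eq_left hc]
          calc (|x1 - a| - y1) / v ≤ |x1 - a| - y1 :=
                div_le_self (by linarith) hv.le
            _ = |x1 - a| - y1 := rfl
      have k2 : (|x2 - b| - y2) / v ≤ max |x2 - b| y2 - y2 := by
        rcases le_total |x2 - b| y2 with hc | hc
        · rw [max_eq_right hc]
          have : (|x2 - b| - y2) / v ≤ 0 :=
            div_nonpos_of_nonpos_of_nonneg (by linarith) hv0.le
          linarith
        · rw [max_eq_left hc]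
          exact div_le_self (by linarith) hv.le
      have tri : x2 - y2 - (x1 + y1) ≤ (|x1 - a| - y1) + |a - b| + (|x2 - b| - y2) := by
        have t1 : a - x1 ≤ |x1 - a| := by rw [abs_sub_comm]; exact le_abs_self _
        have t2 : b - a ≤ |a - b| := by rw [abs_sub_comm]; exact le_abs_self _
        have t3 : x2 - b ≤ |x2 - b| := le_abs_self _
        linarith
      have hdiv : (x2 - y2 - (x1 + y1)) / v ≤
          ((|x1 - a| - y1) + |a - b| + (|x2 - b| - y2)) / v := by gcongr
      rw [add_div, add_div] at hdiv
      linarith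
end

section
/- Let v, x1, y1, x2, y2 be real numbers with v > 1, y1 ≥ 0, y2 ≥ 0 and x1 ≤ x2. Then max(x2 − x1, |y1 − y2|) ≤ y1 + y2 + max(0, (x2 − y2) − (x1 + y1))/v if and only if x2 − y2 ≤ x1 + y1. -/
/-!
Writing `d = (x2 - y2) - (x1 + y1)`, the horizontal distance is `x2 - x1 = y1 + y2 + d`, while
the vertical one, `|y1 - y2|`, never exceeds `y1 + y2`. So the comparison reduces to
`d ≤ max 0 d / v`, which fails for `d > 0` because the highway divides any positive length by
`v > 1`.
-/

theorem abs_sub_le_add_of_nonneg {G : Type*} [AddCommGroup G] [LinearOrder G]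
    [IsOrderedAddMonoid G] {a b : G} (ha : 0 ≤ a) (hb : 0 ≤ b) : |a - b| ≤ a + b := by
  simpa only [abs_of_nonneg ha, abs_of_nonneg hb] using abs_sub a b

theorem le_max_zero_div_iff {K : Type*} [Field K] [LinearOrder K] [IsStrictOrderedRing K]
    {v : K} (hv : 1 < v) (d : K) : d ≤ max 0 d / v ↔ d ≤ 0 := by
  constructor
  · intro h
    by_contra! hd
    rw [max_eq_right hd.le] at h
    exact (div_lt_self hd hv).not_ge h
  · intro hd
    have hv0 : 0 ≤ v := zero_le_one.trans hv.le
    exact hd.trans (by positivity)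

theorem stmt_12_general (v x1 y1 x2 y2 : ℝ) (hv : 1 < v)
    (hy1 : 0 ≤ y1) (hy2 : 0 ≤ y2) :
    max (x2 - x1) |y1 - y2| ≤ y1 + y2 + max 0 ((x2 - y2) - (x1 + y1)) / v ↔
      x2 - y2 ≤ x1 + y1 := by
  set d := (x2 - y2) - (x1 + y1) with hd
  have hv0 : 0 ≤ v := zero_le_one.trans hv.le
  have vertical : |y1 - y2| ≤ y1 + y2 + max 0 d / v :=
    (abs_sub_le_add_of_nonneg hy1 hy2).trans (le_add_of_nonneg_right (by positivity))
  have horizontal : x2 - x1 = y1 + y2 + d := by rw [hd]; ring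
  rw [max_le_iff, and_iff_left vertical, horizontal, add_le_add_iff_left,
    le_max_zero_div_iff hv, hd, sub_nonpos]

/-- Characterization of the `L_∞` walking region: the direct travel time between
`(x1,y1)` and `(x2,y2)` is at most the optimal highway time iff
`x2 - y2 ≤ x1 + y1`. -/
theorem stmt_12 (v x1 y1 x2 y2 : ℝ) (hv : 1 < v)
    (hy1 : 0 ≤ y1) (hy2 : 0 ≤ y2) (hx : x1 ≤ x2) :
    max (x2 - x1) |y1 - y2| ≤ y1 + y2 + max 0 ((x2 - y2) - (x1 + y1)) / v ↔
      x2 - y2 ≤ x1 + y1 :=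
  stmt_12_general v x1 y1 x2 y2 hv hy1 hy2
end

section
/- Define dInf : (ℝ × ℝ) → (ℝ × ℝ) → ℝ by dInf a b = max(|a.1 − b.1|, |a.2 − b.2|). Then for all q1, q2, q ∈ ℝ × ℝ: dInf q1 q + dInf q q2 = dInf q1 q2 if and only if q.1 + q.2 lies in the closed interval with endpoints q1.1 + q1.2 and q2.1 + q2.2 (in either order) and q.1 − q.2 lies in the closed interval with endpoints q1.1 − q1.2 and q2.1 − q2.2 (in either order). -/
/-!
In the rotated coordinates `u = x + y`, `v = x - y` the `L_∞` distance is half the `L_1`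
distance. So `dInf q1 q + dInf q q2 = dInf q1 q2` is the sum of the triangle inequalities
for `u` and for `v` holding with equality, i.e. both of them holding with equality, and on
the line `|a - c| + |c - b| = |a - b|` says exactly that `c` lies between `a` and `b`.
-/

def dInf (a b : ℝ × ℝ) : ℝ := max |a.1 - b.1| |a.2 - b.2|

open Set

theorem abs_add_add_abs_sub {α : Type*} [Field α] [LinearOrder α] [IsStrictOrderedRing α]
    (x y : α) : |x + y| + |x - y| = 2 * max |x| |y| := by
  rcases le_total |x| |y| with h | h <;>
  rcases abs_cases x with ⟨hx, _⟩ | ⟨hx, _⟩ <;> rcases abs_cases y with ⟨hy, _⟩ | ⟨hy, _⟩ <;>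
  rcases abs_cases (x + y) with ⟨hs, _⟩ | ⟨hs, _⟩ <;>
  rcases abs_cases (x - y) with ⟨hd, _⟩ | ⟨hd, _⟩ <;>
  simp only [max_eq_left, max_eq_right, h] <;> linarith

theorem Real.abs_sub_add_abs_sub_eq_iff_mem_uIcc {a b c : ℝ} :
    |a - c| + |c - b| = |a - b| ↔ c ∈ uIcc a b := by
  rw [← Real.dist_eq, ← Real.dist_eq, ← Real.dist_eq, dist_add_dist_eq_iff,
    ← mem_segment_iff_wbtw, segment_eq_uIcc]

theorem two_mul_dInf (a b : ℝ × ℝ) :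
    2 * dInf a b = |(a.1 + a.2) - (b.1 + b.2)| + |(a.1 - a.2) - (b.1 - b.2)| := by
  rw [dInf, ← abs_add_add_abs_sub]
  ring_nf

/-- Under `L_∞`, the set of points `q` with `dInf q1 q + dInf q q2 = dInf q1 q2`
is exactly the smallest bounding parallelogram with sides of slopes `±1`
containing `q1` and `q2`. -/
theorem stmt_16 (q1 q2 q : ℝ × ℝ) :
    dInf q1 q + dInf q q2 = dInf q1 q2 ↔
      q.1 + q.2 ∈ Set.uIcc (q1.1 + q1.2) (q2.1 + q2.2) ∧
      q.1 - q.2 ∈ Set.uIcc (q1.1 - q1.2) (q2.1 - q2.2) := by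
  have hu := abs_sub_le (q1.1 + q1.2) (q.1 + q.2) (q2.1 + q2.2)
  have hv := abs_sub_le (q1.1 - q1.2) (q.1 - q.2) (q2.1 - q2.2)
  rw [← mul_right_inj' (two_ne_zero' ℝ), mul_add, two_mul_dInf, two_mul_dInf, two_mul_dInf,
    add_add_add_comm, eq_comm, add_eq_add_iff_eq_and_eq hu hv,
    ← Real.abs_sub_add_abs_sub_eq_iff_mem_uIcc, ← Real.abs_sub_add_abs_sub_eq_iff_mem_uIcc]
  exact and_congr eq_comm eq_comm
end
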